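/- Let α be a unital partial action of a group G on a unital k-algebra A. Then the map δ_g ⊗ a ↦ α_g(a 1_{g⁻¹}), extended linearly, defines a symmetric partial action of the group algebra kG on A; i.e., it satisfies (PA1) 1·a = a, (PA2) δ_g·(ab) = (δ_g·a)(δ_g·b), (PA3) δ_g·(δ_h·a) = (δ_g·1_A)(δ_{gh}·a), and (PA3') δ_g·(δ_h·a) = (δ_{gh}·a)(δ_g·1_A). -/

import Mathlib

/-- A unital partial action of a group `G` on a unital `k`-algebra `A`:
each domain `A_g = e g * A` is an ideal generated by a central idempotent
`e g`, with `k`-linear unital algebra isomorphisms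
`act g : A_{g⁻¹} → A_g` (encoded as total linear maps, constrained on the
ideals) satisfying the partial action axioms. -/
structure UnitalPartialAction (G : Type*) [Group G] (k : Type*) [CommRing k]
    (A : Type*) [Ring A] [Algebra k A] where
  e : G → A
  act : G → A →ₗ[k] A
  e_idem : ∀ g : G, e g * e g = e g
  e_central : ∀ (g : G) (a : A), e g * a = a * e g
  e_one : e 1 = 1
  act_one : ∀ a : A, act 1 a = a
  mem_act : ∀ (g : G) (a : A), e g⁻¹ * a = a → e g * act g a = act g a
  act_unit : ∀ g : G, act g (e g⁻¹) = e g
  act_mul : ∀ (g : G) (a b : A), e g⁻¹ * a = a → e g⁻¹ * b = b →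
      act g (a * b) = act g a * act g b
  act_inv : ∀ (g : G) (a : A), e g⁻¹ * a = a → act g⁻¹ (act g a) = a
  dom_comp : ∀ (g h : G) (a : A), e h⁻¹ * a = a → e g⁻¹ * act h a = act h a →
      e (g * h)⁻¹ * a = a
  act_comp : ∀ (g h : G) (a : A), e h⁻¹ * a = a → e g⁻¹ * act h a = act h a →
      act g (act h a) = act (g * h) a

variable {G : Type*} [Group G] {k : Type*} [CommRing k]
  {A : Type*} [Ring A] [Algebra k A]

/-- The linear extension of `δ_g ⊗ a ↦ α_g(a 1_{g⁻¹})` to the group algebra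
`kG`. -/
noncomputable def groupAlgAct (α : UnitalPartialAction G k A)
    (f : MonoidAlgebra k G) (a : A) : A :=
  f.coeff.sum fun g c => c • α.act g (α.e g⁻¹ * a)

/-! The key identity is `α_g(1_{g⁻¹} 1_h) = 1_g 1_{gh}`: `α_g` restricts to a multiplicative
bijection `A_{g⁻¹} ∩ A_h → A_g ∩ A_{gh}` (composability of partial maps gives both inclusions),
so it sends the unit `1_{g⁻¹} 1_h` of the first ideal to the unit `1_g 1_{gh}` of the second.
With it, `1_{g⁻¹} α_h(x)` is pulled back into `A_{h⁻¹} ∩ A_{(gh)⁻¹}`, where `α_g ∘ α_h = α_{gh}`,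
which gives (PA3); (PA3') is (PA3) with the central idempotent `1_g` moved to the right. -/

namespace UnitalPartialAction

variable (α : UnitalPartialAction G k A)

lemma e_mul_e_mul (g : G) (a : A) : α.e g * (α.e g * a) = α.e g * a := by
  rw [← mul_assoc, α.e_idem]

lemma e_mul_mul_e_mul (g : G) (a b : A) :
    α.e g * a * (α.e g * b) = α.e g * (a * b) := by
  rw [mul_assoc, ← mul_assoc a, ← α.e_central, mul_assoc, α.e_mul_e_mul]

lemma e_mul_mul_e (g : G) (a : A) : α.e g * (a * α.e g) = a * α.e g := by
  rw [α.e_central, mul_assoc, α.e_idem]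

lemma e_mul_e_central (g h : G) (a : A) : α.e g * α.e h * a = a * (α.e g * α.e h) := by
  rw [mul_assoc, α.e_central h, ← mul_assoc, α.e_central g, mul_assoc]

lemma e_mul_act (g : G) (a : A) :
    α.e g * α.act g (α.e g⁻¹ * a) = α.act g (α.e g⁻¹ * a) :=
  α.mem_act g _ (α.e_mul_e_mul _ _)

lemma act_e_inv_mul_mul (g : G) (a b : A) :
    α.act g (α.e g⁻¹ * (a * b)) = α.act g (α.e g⁻¹ * a) * α.act g (α.e g⁻¹ * b) := by
  rw [← α.e_mul_mul_e_mul, α.act_mul g _ _ (α.e_mul_e_mul _ _) (α.e_mul_e_mul _ _)]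

lemma act_act_inv (g : G) (a : A) (ha : α.e g * a = a) : α.act g (α.act g⁻¹ a) = a := by
  simpa using α.act_inv g⁻¹ a (by rwa [inv_inv])

lemma e_mul_act_of_mem (g h : G) (x : A) (hg : α.e g⁻¹ * x = x) (hh : α.e h * x = x) :
    α.e (g * h) * α.act g x = α.act g x := by
  set y := α.act h⁻¹ x
  have hy : α.e h⁻¹ * y = y := α.mem_act h⁻¹ x (by rwa [inv_inv])
  have hxy : α.act h y = x := α.act_act_inv h x hh
  have hgy : α.e g⁻¹ * α.act h y = α.act h y := by rwa [hxy]
  rw [← hxy, α.act_comp g h y hy hgy]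
  exact α.mem_act (g * h) y (α.dom_comp g h y hy hgy)

lemma act_e_inv_mul_e (g h : G) : α.act g (α.e g⁻¹ * α.e h) = α.e g * α.e (g * h) := by
  set x := α.e g⁻¹ * α.e h
  set v := α.e g * α.e (g * h)
  have hx : α.e g⁻¹ * x = x := α.e_mul_e_mul _ _
  have hv : α.e g * v = v := α.e_mul_e_mul _ _
  have hvu : v * α.act g x = α.act g x := by
    rw [mul_assoc, α.e_mul_act_of_mem g h x hx (α.e_mul_mul_e h _), α.mem_act g x hx]
  have hw : α.e g⁻¹ * α.act g⁻¹ v = α.act g⁻¹ v := α.mem_act g⁻¹ v (by rwa [inv_inv])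
  have hxw : x * α.act g⁻¹ v = α.act g⁻¹ v := by
    have hhw := α.e_mul_act_of_mem g⁻¹ (g * h) v (by rwa [inv_inv]) (α.e_mul_mul_e _ _)
    rw [inv_mul_cancel_left] at hhw
    rw [mul_assoc, hhw, hw]
  have huv : α.act g x * v = v := by
    have h := α.act_mul g x _ hx hw
    rw [hxw, α.act_act_inv g v hv] at h
    exact h.symm
  calc α.act g x = v * α.act g x := hvu.symm
    _ = α.act g x * v := α.e_mul_e_central _ _ _
    _ = v := huv

lemma e_inv_mul_act_e_inv_mul (g h : G) (a : A) :
    α.e g⁻¹ * α.act h (α.e h⁻¹ * a) = α.act h (α.e h⁻¹ * (α.e (h⁻¹ * g⁻¹) * a)) := by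
  rw [α.act_e_inv_mul_mul, α.act_e_inv_mul_e, mul_inv_cancel_left, α.e_central h, mul_assoc,
    α.e_mul_act]

lemma act_e_inv_mul_act (g h : G) (a : A) :
    α.act g (α.e g⁻¹ * α.act h (α.e h⁻¹ * a)) =
      α.e g * α.act (g * h) (α.e (g * h)⁻¹ * a) := by
  have hy : α.e g⁻¹ * α.act h (α.e h⁻¹ * (α.e (h⁻¹ * g⁻¹) * a)) =
      α.act h (α.e h⁻¹ * (α.e (h⁻¹ * g⁻¹) * a)) := by
    rw [← α.e_inv_mul_act_e_inv_mul, α.e_mul_e_mul]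
  have hswap : α.e h⁻¹ * (α.e (h⁻¹ * g⁻¹) * a) = α.e (g * h)⁻¹ * (α.e h⁻¹ * a) := by
    rw [mul_inv_rev, ← mul_assoc, ← mul_assoc, α.e_central h⁻¹]
  rw [α.e_inv_mul_act_e_inv_mul, α.act_comp g h _ (α.e_mul_e_mul _ _) hy, hswap,
    α.act_e_inv_mul_mul, α.act_e_inv_mul_e, mul_inv_cancel_right, α.e_central (g * h) (α.e g),
    mul_assoc, α.e_mul_act]

end UnitalPartialAction

section groupAlgAct

variable (α : UnitalPartialAction G k A)

lemma groupAlgAct_add (f f' : MonoidAlgebra k G) (a : A) :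
    groupAlgAct α (f + f') a = groupAlgAct α f a + groupAlgAct α f' a :=
  Finsupp.sum_add_index' (fun _ => zero_smul k _) (fun _ c c' => add_smul c c' _)

lemma groupAlgAct_smul (c : k) (f : MonoidAlgebra k G) (a : A) :
    groupAlgAct α (c • f) a = c • groupAlgAct α f a := by
  rw [groupAlgAct, groupAlgAct, MonoidAlgebra.coeff_smul,
    Finsupp.sum_smul_index (h := fun g c => c • α.act g (α.e g⁻¹ * a))
      (fun _ => zero_smul k _), Finsupp.smul_sum]
  simp only [mul_smul]

lemma groupAlgAct_single (g : G) (c : k) (a : A) :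
    groupAlgAct α (MonoidAlgebra.single g c) a = c • α.act g (α.e g⁻¹ * a) := by
  rw [groupAlgAct, MonoidAlgebra.coeff_single,
    Finsupp.sum_single_index (h := fun g c => c • α.act g (α.e g⁻¹ * a)) (zero_smul k _)]

lemma groupAlgAct_one (a : A) : groupAlgAct α 1 a = a := by
  rw [MonoidAlgebra.one_def, groupAlgAct_single, inv_one, α.e_one, one_mul, α.act_one, one_smul]

end groupAlgAct

/-- A unital partial action of `G` on `A` induces a symmetric partial action
of the group algebra `kG` on `A`: (PA1) `1·a = a`; (PA2)
`δ_g·(ab) = (δ_g·a)(δ_g·b)`; (PA3) `δ_g·(δ_h·a) = (δ_g·1_A)(δ_{gh}·a)`;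
(PA3') `δ_g·(δ_h·a) = (δ_{gh}·a)(δ_g·1_A)`. -/
theorem stmt10 (α : UnitalPartialAction G k A) :
    (∀ (f f' : MonoidAlgebra k G) (a : A),
      groupAlgAct α (f + f') a = groupAlgAct α f a + groupAlgAct α f' a) ∧
    (∀ (c : k) (f : MonoidAlgebra k G) (a : A),
      groupAlgAct α (c • f) a = c • groupAlgAct α f a) ∧
    (∀ (g : G) (a : A),
      groupAlgAct α (MonoidAlgebra.single g 1) a = α.act g (α.e g⁻¹ * a)) ∧
    (∀ a : A, groupAlgAct α (1 : MonoidAlgebra k G) a = a) ∧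
    (∀ (g : G) (a b : A),
      groupAlgAct α (MonoidAlgebra.single g 1) (a * b) =
        groupAlgAct α (MonoidAlgebra.single g 1) a *
          groupAlgAct α (MonoidAlgebra.single g 1) b) ∧
    (∀ (g h : G) (a : A),
      groupAlgAct α (MonoidAlgebra.single g 1)
          (groupAlgAct α (MonoidAlgebra.single h 1) a) =
        groupAlgAct α (MonoidAlgebra.single g 1) (1 : A) *
          groupAlgAct α (MonoidAlgebra.single (g * h) 1) a) ∧
    (∀ (g h : G) (a : A),
      groupAlgAct α (MonoidAlgebra.single g 1)
          (groupAlgAct α (MonoidAlgebra.single h 1) a) =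
        groupAlgAct α (MonoidAlgebra.single (g * h) 1) a *
          groupAlgAct α (MonoidAlgebra.single g 1) (1 : A)) := by
  simp only [groupAlgAct_single, one_smul, mul_one, α.act_unit]
  refine ⟨groupAlgAct_add α, groupAlgAct_smul α, fun _ _ => trivial, groupAlgAct_one α,
    α.act_e_inv_mul_mul, α.act_e_inv_mul_act, fun g h a => ?_⟩
  rw [α.act_e_inv_mul_act, α.e_central]
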